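/- Let n ≥ 1, ε > 0, R ≥ 0, and let c_n^ε = ε^n · Γ(n/2+1) / (Γ(n) · n · π^{n/2}). For an integer N ≥ 0 define I_N(R) = ∫_{{(v_1,…,v_N) ∈ (ℝ^n)^N : Σ_{j=1}^{N} ‖v_j‖ ≤ R}} Π_{i=1}^{N} c_n^ε·exp(−ε‖v_i‖) dv_1⋯dv_N (with I_0(R) = 1). Then for every N ≥ 1, I_N(R) ≥ I_{N−1}(R) − exp(−ε·R) · (c_n^ε)^{N−1} · e_{n−1}(ε·R) · V_n(R)^{N−1}, where V_n(R) = π^{n/2}·R^n/Γ(n/2+1) is the Lebesgue volume of the Euclidean ball of radius R in ℝ^n and e_k(α) = Σ_{i=0}^{k} α^i/i!. -/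

import Mathlib

open MeasureTheory Real Finset

/-- The normalising constant of the `n`-dimensional Laplacian density with parameter `ε`. -/
noncomputable def lapConst (n : ℕ) (ε : ℝ) : ℝ :=
  ε ^ n * Real.Gamma ((n : ℝ) / 2 + 1) / (Real.Gamma n * n * Real.pi ^ ((n : ℝ) / 2))

/-- The volume of the Euclidean ball of radius `R` in `ℝ^n`. -/
noncomputable def ballVol (n : ℕ) (R : ℝ) : ℝ :=
  Real.pi ^ ((n : ℝ) / 2) * R ^ n / Real.Gamma ((n : ℝ) / 2 + 1)

/-- `I_N(R)`: the integral of the product of `N` independent `n`-dimensional Laplacian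
densities over the region where the sum of the Euclidean norms is at most `R`.
(For `N = 0` this equals `1` when `R ≥ 0`.) -/
noncomputable def lapIter (n : ℕ) (ε R : ℝ) (N : ℕ) : ℝ :=
  ∫ v in {v : Fin N → EuclideanSpace ℝ (Fin n) | ∑ j, ‖v j‖ ≤ R},
    ∏ i, lapConst n ε * Real.exp (-ε * ‖v i‖)

/-
Split an `(m+1)`-tuple as `(w, v)` with `v = (v₁, …, vₘ)` and `s = ∑ ‖vⱼ‖ ≤ R`. The density
of `w` has total mass `1`, and the mass it loses to the constraint `‖w‖ ≤ R - s` is the radial tail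
`∫_{‖w‖ > t} c e^{-ε‖w‖} dw = e^{-εt} e_{n-1}(εt)` at `t = R - s` (an incomplete Gamma integral).
Weighted by the density `c^m e^{-εs}` of `v`, the loss is `c^m e^{-εR} e_{n-1}(ε(R - s))`, at most
`c^m e^{-εR} e_{n-1}(εR)`; integrating over `{s ≤ R} ⊆ B(0,R)^m` costs at most `V_n(R)^m`.
Working with lower Lebesgue integrals lets Tonelli run without integrability side conditions.
-/

open Set Filter Topology
open scoped ENNReal Nat

/-- The paper's `e_{m-1}(x)`: the first `m` terms of the exponential series. -/
noncomputable def expPartialSum (m : ℕ) (x : ℝ) : ℝ := ∑ k ∈ range m, x ^ k / k !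

theorem expPartialSum_succ (m : ℕ) (x : ℝ) :
    expPartialSum (m + 1) x = expPartialSum m x + x ^ m / m ! :=
  sum_range_succ _ _

theorem expPartialSum_nonneg (m : ℕ) {x : ℝ} (hx : 0 ≤ x) : 0 ≤ expPartialSum m x :=
  sum_nonneg fun _ _ => by positivity

theorem expPartialSum_le_expPartialSum (m : ℕ) {x y : ℝ} (hx : 0 ≤ x) (hxy : x ≤ y) :
    expPartialSum m x ≤ expPartialSum m y :=
  sum_le_sum fun _ _ => by gcongr

theorem hasDerivAt_expPartialSum_succ (m : ℕ) (x : ℝ) :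
    HasDerivAt (expPartialSum (m + 1)) (expPartialSum m x) x := by
  induction m with
  | zero =>
    rw [show expPartialSum 1 = fun _ => 1 from funext fun _ => by simp [expPartialSum]]
    simpa [expPartialSum] using hasDerivAt_const x (1 : ℝ)
  | succ m ih =>
    rw [show expPartialSum (m + 2) = fun x => expPartialSum (m + 1) x + x ^ (m + 1) / (m + 1)! from
      funext fun x => expPartialSum_succ _ x, expPartialSum_succ]
    refine (ih.add ((hasDerivAt_pow (m + 1) x).div_const ((m + 1)! : ℝ))).congr_deriv ?_
    rw [Nat.factorial_succ, Nat.cast_mul, Nat.add_sub_cancel]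
    field_simp

theorem tendsto_exp_neg_mul_mul_expPartialSum {ε : ℝ} (hε : 0 < ε) (m : ℕ) :
    Tendsto (fun y => exp (-ε * y) * expPartialSum m (ε * y)) atTop (𝓝 0) := by
  have hterm : ∀ k ∈ range m,
      Tendsto (fun y => (ε * y) ^ k * exp (-(ε * y)) / k !) atTop (𝓝 0) := fun k _ => by
    simpa using ((tendsto_pow_mul_exp_neg_atTop_nhds_zero k).comp
      (tendsto_id.const_mul_atTop hε)).div_const (k ! : ℝ)
  have hsum := tendsto_finsetSum _ hterm
  rw [sum_const_zero] at hsum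
  refine hsum.congr fun y => ?_
  simp only [expPartialSum, mul_sum]
  refine sum_congr rfl fun k _ => ?_
  ring_nf

theorem hasDerivAt_antideriv_pow_mul_exp_neg_mul {ε : ℝ} (hε : 0 < ε) (m : ℕ) (y : ℝ) :
    HasDerivAt (fun y => -(m ! / ε ^ (m + 1)) * (exp (-ε * y) * expPartialSum (m + 1) (ε * y)))
      (y ^ m * exp (-ε * y)) y := by
  have hexp : HasDerivAt (fun y => exp (-ε * y)) (exp (-ε * y) * -ε) y := by
    simpa using ((hasDerivAt_id y).const_mul (-ε)).exp
  have hsum := (hasDerivAt_expPartialSum_succ m (ε * y)).comp y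
    ((hasDerivAt_id y).const_mul ε)
  refine ((hexp.mul hsum).const_mul (-(m ! / ε ^ (m + 1)))).congr_deriv ?_
  simp only [Function.comp_apply, expPartialSum_succ]
  field_simp
  ring

theorem integral_Ioi_pow_mul_exp_neg_mul {ε : ℝ} (hε : 0 < ε) (m : ℕ) {t : ℝ} (ht : 0 ≤ t) :
    ∫ y in Ioi t, y ^ m * exp (-ε * y) =
      m ! / ε ^ (m + 1) * (exp (-ε * t) * expPartialSum (m + 1) (ε * t)) := by
  have hlim := (tendsto_exp_neg_mul_mul_expPartialSum hε (m + 1)).const_mul (-(m ! / ε ^ (m + 1)))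
  rw [mul_zero] at hlim
  rw [integral_Ioi_of_hasDerivAt_of_nonneg'
    (fun y _ => hasDerivAt_antideriv_pow_mul_exp_neg_mul hε m y)
    (fun y hy => by have : 0 ≤ y := ht.trans hy.out.le; positivity) hlim]
  ring

theorem integrableOn_Ioi_pow_mul_exp_neg_mul {ε : ℝ} (hε : 0 < ε) (m : ℕ) {t : ℝ} (ht : 0 ≤ t) :
    IntegrableOn (fun y => y ^ m * exp (-ε * y)) (Ioi t) := by
  have hlim := (tendsto_exp_neg_mul_mul_expPartialSum hε (m + 1)).const_mul (-(m ! / ε ^ (m + 1)))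
  rw [mul_zero] at hlim
  exact integrableOn_Ioi_deriv_of_nonneg'
    (fun y _ => hasDerivAt_antideriv_pow_mul_exp_neg_mul hε m y)
    (fun y hy => by have : 0 ≤ y := ht.trans hy.out.le; positivity) hlim

variable {n : ℕ} {ε R : ℝ}

theorem lapConst_nonneg (hε : 0 ≤ ε) : 0 ≤ lapConst n ε := by
  unfold lapConst
  have := Gamma_nonneg_of_nonneg (Nat.cast_nonneg (α := ℝ) n)
  positivity

theorem ballVol_nonneg (hR : 0 ≤ R) : 0 ≤ ballVol n R := by
  unfold ballVol
  positivity

theorem volume_ball_eq_ballVol (hn : 1 ≤ n) (hR : 0 ≤ R) :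
    volume (Metric.ball (0 : EuclideanSpace ℝ (Fin n)) R) = ENNReal.ofReal (ballVol n R) := by
  have : Nonempty (Fin n) := ⟨⟨0, hn⟩⟩
  have hsqrt : √π ^ n = π ^ ((n : ℝ) / 2) := by
    rw [sqrt_eq_rpow, ← rpow_natCast, ← rpow_mul pi_nonneg]
    ring_nf
  rw [EuclideanSpace.volume_ball, Fintype.card_fin, ← ENNReal.ofReal_pow hR,
    ← ENNReal.ofReal_mul (by positivity), hsqrt, ballVol]
  ring_nf

theorem volume_closedBall_eq_ballVol (hn : 1 ≤ n) (hR : 0 ≤ R) :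
    volume (Metric.closedBall (0 : EuclideanSpace ℝ (Fin n)) R) =
      ENNReal.ofReal (ballVol n R) := by
  have : Nonempty (Fin n) := ⟨⟨0, hn⟩⟩
  rw [EuclideanSpace.volume_closedBall, ← EuclideanSpace.volume_ball,
    volume_ball_eq_ballVol hn hR]

theorem integral_lapConst_mul_exp_tail (hn : 1 ≤ n) (hε : 0 < ε) {t : ℝ} (ht : 0 ≤ t) :
    ∫ v in {v : EuclideanSpace ℝ (Fin n) | t < ‖v‖}, lapConst n ε * exp (-ε * ‖v‖) =
      exp (-ε * t) * expPartialSum n (ε * t) := by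
  have : Nonempty (Fin n) := ⟨⟨0, hn⟩⟩
  obtain ⟨m, rfl⟩ : ∃ m, n = m + 1 := ⟨n - 1, by omega⟩
  set f : ℝ → ℝ := (Ioi t).indicator fun y => lapConst (m + 1) ε * exp (-ε * y)
  have hradial : ∫ y in Ioi 0, y ^ m • f y = lapConst (m + 1) ε *
      (m ! / ε ^ (m + 1) * (exp (-ε * t) * expPartialSum (m + 1) (ε * t))) := by
    have hf : ∀ y, y ^ m • f y =
        (Ioi t).indicator (fun y => lapConst (m + 1) ε * (y ^ m * exp (-ε * y))) y := fun y => by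
      by_cases hy : y ∈ Ioi t <;> simp [f, hy, mul_left_comm]
    simp_rw [hf]
    rw [setIntegral_indicator measurableSet_Ioi, Ioi_inter_Ioi, max_eq_right ht,
      integral_const_mul, integral_Ioi_pow_mul_exp_neg_mul hε m ht]
  rw [← integral_indicator (measurableSet_lt measurable_const measurable_norm)]
  change ∫ v, f ‖v‖ = _
  rw [integral_fun_norm_addHaar, finrank_euclideanSpace_fin, Nat.add_sub_cancel, hradial,
    measureReal_def, volume_ball_eq_ballVol (by omega) zero_le_one,
    ENNReal.toReal_ofReal (ballVol_nonneg zero_le_one), ballVol, lapConst, one_pow, nsmul_eq_mul,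
    smul_eq_mul, Nat.cast_succ, Gamma_nat_eq_factorial]
  have : 0 < Gamma ((m + 1 : ℝ) / 2 + 1) := Gamma_pos_of_pos (by positivity)
  have : 0 < π ^ ((m + 1 : ℝ) / 2) := by positivity
  -- `lapConst` is normalised exactly against the polar factor `n · |B(0,1)| · (n-1)! / εⁿ`
  field_simp

theorem integrable_exp_neg_mul_norm (hn : 1 ≤ n) (hε : 0 < ε) :
    Integrable fun v : EuclideanSpace ℝ (Fin n) => exp (-ε * ‖v‖) := by
  have : Nonempty (Fin n) := ⟨⟨0, hn⟩⟩
  rw [integrable_fun_norm_addHaar volume (f := fun y => exp (-ε * y))]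
  simpa using integrableOn_Ioi_pow_mul_exp_neg_mul hε _ le_rfl

noncomputable def lapDensity (n : ℕ) (ε : ℝ) (v : EuclideanSpace ℝ (Fin n)) : ℝ≥0∞ :=
  ENNReal.ofReal (lapConst n ε * exp (-ε * ‖v‖))

@[fun_prop]
theorem measurable_lapDensity : Measurable (lapDensity n ε) := by
  unfold lapDensity
  fun_prop

theorem setLIntegral_lapDensity_tail (hn : 1 ≤ n) (hε : 0 < ε) {t : ℝ} (ht : 0 ≤ t) :
    ∫⁻ v in {v | t < ‖v‖}, lapDensity n ε v =
      ENNReal.ofReal (exp (-ε * t) * expPartialSum n (ε * t)) := by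
  rw [← integral_lapConst_mul_exp_tail hn hε ht, ofReal_integral_eq_lintegral_ofReal]
  · rfl
  · exact ((integrable_exp_neg_mul_norm hn hε).const_mul _).integrableOn
  · exact ae_of_all _ fun v => mul_nonneg (lapConst_nonneg hε.le) (exp_pos _).le

theorem lintegral_lapDensity (hn : 1 ≤ n) (hε : 0 < ε) : ∫⁻ v, lapDensity n ε v = 1 := by
  have : Nonempty (Fin n) := ⟨⟨0, hn⟩⟩
  have hsupp : {v : EuclideanSpace ℝ (Fin n) | 0 < ‖v‖} = {0}ᶜ := by ext; simp
  rw [← restrict_compl_singleton (μ := volume) (0 : EuclideanSpace ℝ (Fin n)), ← hsupp,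
    setLIntegral_lapDensity_tail hn hε le_rfl]
  obtain ⟨m, rfl⟩ : ∃ m, n = m + 1 := ⟨n - 1, by omega⟩
  simp [expPartialSum, Finset.sum_range_succ']

theorem one_le_setLIntegral_closedBall_add_tail (hn : 1 ≤ n) (hε : 0 < ε) {t : ℝ}
    (ht : 0 ≤ t) :
    1 ≤ (∫⁻ v in Metric.closedBall 0 t, lapDensity n ε v) +
      ENNReal.ofReal (exp (-ε * t) * expPartialSum n (ε * t)) := by
  rw [← lintegral_lapDensity hn hε, ← setLIntegral_lapDensity_tail hn hε ht,
    ← setLIntegral_univ]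
  refine (lintegral_mono_set fun v _ => ?_).trans (lintegral_union_le _ _ _)
  by_cases hv : ‖v‖ ≤ t
  · exact Or.inl (mem_closedBall_zero_iff.mpr hv)
  · exact Or.inr (not_le.mp hv)

theorem prod_lapDensity (hε : 0 ≤ ε) {m : ℕ} (v : Fin m → EuclideanSpace ℝ (Fin n)) :
    ∏ j, lapDensity n ε (v j) =
      ENNReal.ofReal (lapConst n ε ^ m * exp (-ε * ∑ j, ‖v j‖)) := by
  simp only [lapDensity]
  rw [← ENNReal.ofReal_prod_of_nonneg fun j _ =>
    mul_nonneg (lapConst_nonneg hε) (exp_pos _).le, prod_mul_distrib, prod_const, card_univ,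
    Fintype.card_fin, mul_sum, exp_sum]

theorem lintegral_fin_succ_eq_lintegral_lintegral_cons {α : Type*} [MeasureSpace α]
    [SigmaFinite (volume : Measure α)] {m : ℕ} {f : (Fin (m + 1) → α) → ℝ≥0∞}
    (hf : Measurable f) :
    ∫⁻ v, f v = ∫⁻ v : Fin m → α, ∫⁻ w, f (Fin.cons w v) := by
  set e := MeasurableEquiv.piFinSuccAbove (fun _ : Fin (m + 1) => α) 0
  rw [← (volume_preserving_piFinSuccAbove _ 0).symm.lintegral_comp hf, Measure.volume_eq_prod,
    lintegral_prod_symm' (fun p => f (e.symm p)) (hf.comp e.symm.measurable)]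
  simp [e, MeasurableEquiv.piFinSuccAbove_symm_apply, Fin.insertNthEquiv, Fin.insertNth_zero']

def sumNormLe (n m : ℕ) (R : ℝ) : Set (Fin m → EuclideanSpace ℝ (Fin n)) :=
  {v | ∑ j, ‖v j‖ ≤ R}

noncomputable def lapLIntegral (n : ℕ) (ε R : ℝ) (m : ℕ) : ℝ≥0∞ :=
  ∫⁻ v in sumNormLe n m R, ∏ i, lapDensity n ε (v i)

theorem measurableSet_sumNormLe (m : ℕ) : MeasurableSet (sumNormLe n m R) :=
  measurableSet_le (by fun_prop) measurable_const

theorem volume_sumNormLe_le (hn : 1 ≤ n) (hR : 0 ≤ R) (m : ℕ) :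
    volume (sumNormLe n m R) ≤ ENNReal.ofReal (ballVol n R ^ m) := by
  calc volume (sumNormLe n m R)
      ≤ volume (univ.pi fun _ => Metric.closedBall (0 : EuclideanSpace ℝ (Fin n)) R) :=
        measure_mono fun v (hv : ∑ j, ‖v j‖ ≤ R) j _ => mem_closedBall_zero_iff.mpr
          ((single_le_sum (fun j _ => norm_nonneg (v j)) (mem_univ j)).trans hv)
    _ = ENNReal.ofReal (ballVol n R ^ m) := by
        simp [volume_pi_pi, volume_closedBall_eq_ballVol hn hR,
          ENNReal.ofReal_pow (ballVol_nonneg hR)]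

theorem lapIter_eq_toReal_lapLIntegral (hε : 0 ≤ ε) (m : ℕ) :
    lapIter n ε R m = (lapLIntegral n ε R m).toReal := by
  have hnonneg : ∀ w : EuclideanSpace ℝ (Fin n), 0 ≤ lapConst n ε * exp (-ε * ‖w‖) :=
    fun w => mul_nonneg (lapConst_nonneg hε) (exp_pos _).le
  rw [lapIter, integral_eq_lintegral_of_nonneg_ae
    (ae_of_all _ fun v => prod_nonneg fun i _ => hnonneg (v i))
    (Continuous.aestronglyMeasurable (by fun_prop))]
  simp only [ENNReal.ofReal_prod_of_nonneg fun i _ => hnonneg _, lapDensity, lapLIntegral,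
    sumNormLe]

theorem lapLIntegral_ne_top (hn : 1 ≤ n) (hε : 0 ≤ ε) (hR : 0 ≤ R) (m : ℕ) :
    lapLIntegral n ε R m ≠ ⊤ := by
  have hprod : ∀ v : Fin m → EuclideanSpace ℝ (Fin n),
      ∏ i, lapDensity n ε (v i) ≤ ENNReal.ofReal (lapConst n ε ^ m) := fun v => by
    rw [prod_lapDensity hε]
    refine ENNReal.ofReal_le_ofReal (mul_le_of_le_one_right (pow_nonneg (lapConst_nonneg hε) m)
      (exp_le_one_iff.mpr (mul_nonpos_of_nonpos_of_nonneg (neg_nonpos.mpr hε) ?_)))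
    exact sum_nonneg fun j _ => norm_nonneg (v j)
  refine ne_top_of_le_ne_top (ENNReal.mul_ne_top ENNReal.ofReal_ne_top ENNReal.ofReal_ne_top)
    (b := ENNReal.ofReal (lapConst n ε ^ m) * ENNReal.ofReal (ballVol n R ^ m)) ?_
  calc lapLIntegral n ε R m
      ≤ ∫⁻ _ in sumNormLe n m R, ENNReal.ofReal (lapConst n ε ^ m) := lintegral_mono hprod
    _ = ENNReal.ofReal (lapConst n ε ^ m) * volume (sumNormLe n m R) := setLIntegral_const _ _
    _ ≤ ENNReal.ofReal (lapConst n ε ^ m) * ENNReal.ofReal (ballVol n R ^ m) :=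
        mul_le_mul_right (volume_sumNormLe_le hn hR m) _

theorem lapLIntegral_succ (m : ℕ) :
    lapLIntegral n ε R (m + 1) =
      ∫⁻ v : Fin m → EuclideanSpace ℝ (Fin n),
        (∏ j, lapDensity n ε (v j)) *
          ∫⁻ w in Metric.closedBall 0 (R - ∑ j, ‖v j‖), lapDensity n ε w := by
  have hg := measurable_lapDensity (n := n) (ε := ε)
  rw [lapLIntegral, ← lintegral_indicator (measurableSet_sumNormLe _),
    lintegral_fin_succ_eq_lintegral_lintegral_cons
      ((by fun_prop : Measurable fun v : Fin (m + 1) → EuclideanSpace ℝ (Fin n) =>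
        ∏ i, lapDensity n ε (v i)).indicator (measurableSet_sumNormLe _))]
  refine lintegral_congr fun v => ?_
  rw [← lintegral_indicator Metric.isClosed_closedBall.measurableSet,
    ← lintegral_const_mul _ (hg.indicator Metric.isClosed_closedBall.measurableSet)]
  refine lintegral_congr fun w => ?_
  have hmem : Fin.cons w v ∈ sumNormLe n (m + 1) R ↔
      w ∈ Metric.closedBall 0 (R - ∑ j, ‖v j‖) := by
    simp [sumNormLe, Fin.sum_univ_succ, le_sub_iff_add_le]
  by_cases hw : w ∈ Metric.closedBall 0 (R - ∑ j, ‖v j‖)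
  · rw [indicator_of_mem (hmem.mpr hw), indicator_of_mem hw, Fin.prod_univ_succ]
    simp [mul_comm]
  · rw [indicator_of_notMem (mt hmem.mp hw), indicator_of_notMem hw, mul_zero]

theorem prod_lapDensity_mul_tail_le (hε : 0 ≤ ε) {m : ℕ} {v : Fin m → EuclideanSpace ℝ (Fin n)}
    (hv : ∑ j, ‖v j‖ ≤ R) :
    (∏ j, lapDensity n ε (v j)) * ENNReal.ofReal (exp (-ε * (R - ∑ j, ‖v j‖)) *
        expPartialSum n (ε * (R - ∑ j, ‖v j‖))) ≤
      ENNReal.ofReal (exp (-ε * R) * lapConst n ε ^ m * expPartialSum n (ε * R)) := by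
  have hs : 0 ≤ ∑ j, ‖v j‖ := sum_nonneg fun j _ => norm_nonneg _
  have hc := lapConst_nonneg (n := n) hε
  rw [prod_lapDensity hε, ← ENNReal.ofReal_mul (by positivity)]
  refine ENNReal.ofReal_le_ofReal ?_
  calc lapConst n ε ^ m * exp (-ε * ∑ j, ‖v j‖) *
        (exp (-ε * (R - ∑ j, ‖v j‖)) * expPartialSum n (ε * (R - ∑ j, ‖v j‖)))
      = exp (-ε * R) * lapConst n ε ^ m * expPartialSum n (ε * (R - ∑ j, ‖v j‖)) := by
        rw [show -ε * R = -ε * ∑ j, ‖v j‖ + -ε * (R - ∑ j, ‖v j‖) by ring, exp_add]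
        ring
    _ ≤ exp (-ε * R) * lapConst n ε ^ m * expPartialSum n (ε * R) := by
        gcongr
        exact expPartialSum_le_expPartialSum n (by nlinarith) (by nlinarith)

theorem lapLIntegral_le_lapLIntegral_succ_add (hn : 1 ≤ n) (hε : 0 < ε) (hR : 0 ≤ R)
    (m : ℕ) :
    lapLIntegral n ε R m ≤ lapLIntegral n ε R (m + 1) +
      ENNReal.ofReal (exp (-ε * R) * lapConst n ε ^ m * expPartialSum n (ε * R) *
        ballVol n R ^ m) := by
  set K := exp (-ε * R) * lapConst n ε ^ m * expPartialSum n (ε * R)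
  have hK : 0 ≤ K := by
    have := lapConst_nonneg (n := n) hε.le
    have := expPartialSum_nonneg n (mul_nonneg hε.le hR)
    positivity
  set F : (Fin m → EuclideanSpace ℝ (Fin n)) → ℝ≥0∞ := fun v =>
    (∏ j, lapDensity n ε (v j)) * ∫⁻ w in Metric.closedBall 0 (R - ∑ j, ‖v j‖), lapDensity n ε w
  have hslice : ∀ v ∈ sumNormLe n m R, ∏ j, lapDensity n ε (v j) ≤ F v + ENNReal.ofReal K :=
    fun v (hv : ∑ j, ‖v j‖ ≤ R) => calc
      ∏ j, lapDensity n ε (v j) = (∏ j, lapDensity n ε (v j)) * 1 := (mul_one _).symm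
      _ ≤ (∏ j, lapDensity n ε (v j)) *
          ((∫⁻ w in Metric.closedBall 0 (R - ∑ j, ‖v j‖), lapDensity n ε w) +
            ENNReal.ofReal (exp (-ε * (R - ∑ j, ‖v j‖)) *
              expPartialSum n (ε * (R - ∑ j, ‖v j‖)))) :=
        mul_le_mul_right (one_le_setLIntegral_closedBall_add_tail hn hε (sub_nonneg.mpr hv)) _
      _ ≤ F v + ENNReal.ofReal K := by
        rw [mul_add]
        exact add_le_add_right (prod_lapDensity_mul_tail_le hε.le hv) _
  calc lapLIntegral n ε R m
      ≤ ∫⁻ v in sumNormLe n m R, (F v + ENNReal.ofReal K) :=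
        setLIntegral_mono' (measurableSet_sumNormLe m) hslice
    _ = (∫⁻ v in sumNormLe n m R, F v) + ENNReal.ofReal K * volume (sumNormLe n m R) := by
        rw [lintegral_add_right _ measurable_const, setLIntegral_const]
    _ ≤ (∫⁻ v, F v) + ENNReal.ofReal K * ENNReal.ofReal (ballVol n R ^ m) :=
        add_le_add (setLIntegral_le_lintegral _ _)
          (mul_le_mul_right (volume_sumNormLe_le hn hR m) _)
    _ = _ := by
        rw [lapLIntegral_succ, ← ENNReal.ofReal_mul hK]

theorem lapIter_le_lapIter_succ_add (hn : 1 ≤ n) (hε : 0 < ε) (hR : 0 ≤ R) (m : ℕ) :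
    lapIter n ε R m ≤ lapIter n ε R (m + 1) +
      exp (-ε * R) * lapConst n ε ^ m * expPartialSum n (ε * R) * ballVol n R ^ m := by
  have hbound :
      0 ≤ exp (-ε * R) * lapConst n ε ^ m * expPartialSum n (ε * R) * ballVol n R ^ m := by
    have := lapConst_nonneg (n := n) hε.le
    have := expPartialSum_nonneg n (mul_nonneg hε.le hR)
    have := ballVol_nonneg (n := n) hR
    positivity
  have hfinite := lapLIntegral_ne_top hn hε.le hR (m + 1)
  rw [lapIter_eq_toReal_lapLIntegral hε.le, lapIter_eq_toReal_lapLIntegral hε.le,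
    ← ENNReal.toReal_ofReal hbound, ← ENNReal.toReal_add hfinite ENNReal.ofReal_ne_top]
  exact ENNReal.toReal_mono (ENNReal.add_ne_top.mpr ⟨hfinite, ENNReal.ofReal_ne_top⟩)
    (lapLIntegral_le_lapLIntegral_succ_add hn hε hR m)

/-- the recursive lower bound
`I_N(R) ≥ I_{N−1}(R) − exp(−εR) · (c_n^ε)^{N−1} · e_{n−1}(εR) · V_n(R)^{N−1}`
for every `N ≥ 1`, where `e_{n−1}(α) = Σ_{k=0}^{n−1} α^k/k!` and `V_n(R)` is the volume
of the Euclidean ball of radius `R` in `ℝ^n`. -/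
theorem lapIter_recursive_bound (n : ℕ) (hn : 1 ≤ n) (ε : ℝ) (hε : 0 < ε)
    (R : ℝ) (hR : 0 ≤ R) (N : ℕ) (hN : 1 ≤ N) :
    lapIter n ε R (N - 1) -
        Real.exp (-ε * R) * lapConst n ε ^ (N - 1) *
          (∑ k ∈ Finset.range n, (ε * R) ^ k / (Nat.factorial k)) *
            ballVol n R ^ (N - 1) ≤
      lapIter n ε R N := by
  obtain ⟨m, rfl⟩ := Nat.exists_eq_add_of_le' hN
  rw [Nat.add_sub_cancel]
  exact sub_le_iff_le_add.mpr (lapIter_le_lapIter_succ_add hn hε hR m)
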